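/- With H a graph of size λ and notation as in the main construction, suppose every G_α (α < λ⁺) embeds into H. Define U to be the set of finite sequences s = ⟨v_0, …, v_n⟩ of vertices of H such that for every ξ < λ⁺ there exists an (s, ξ)-embedding. Then for every s ∈ U there exists a vertex v of H with s⌢v ∈ U. -/

import Mathlib

open Cardinal Ordinal

/-- The poset `T α`: strictly decreasing finite lists of ordinals `< α`, ordered by
reverse strict-prefix; the empty list is the top element, and the lists starting with `β`
form the copy of `T β`. -/
def TT (α : Ordinal) : Type 1 :=
  {l : List Ordinal // l.Pairwise (· > ·) ∧ ∀ x ∈ l, x < α}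

instance instPOTT (α : Ordinal) : PartialOrder (TT α) where
  le u v := v.1 <+: u.1
  le_refl u := List.prefix_refl _
  le_trans _ _ _ h1 h2 := List.IsPrefix.trans h2 h1
  le_antisymm _ _ h1 h2 :=
    Subtype.ext (List.IsPrefix.eq_of_length h2 ((List.IsPrefix.length_le h2).antisymm (List.IsPrefix.length_le h1)))

/-- The top element of `T α`. -/
def topT (α : Ordinal) : TT α := ⟨[], by simp, by simp⟩

/-- The rank function of the reversed order `⟨T α, >⟩`. -/
def dT {α : Ordinal} (v : TT α) : ℕ := v.1.length

/-- The rank function of `⟨T α, <⟩`; the top element has rank `α`. -/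
def rT {α : Ordinal} (v : TT α) : Ordinal := v.1.getLastD α

/-- The graph `G_α` on `T α`: `u ~ v` iff `u, v` are comparable and `d u ~_G d v`. -/
def Gg (G : SimpleGraph ℕ) (α : Ordinal) : SimpleGraph (TT α) where
  Adj u v := u ≠ v ∧ (u ≤ v ∨ v ≤ u) ∧ G.Adj (dT u) (dT v)
  symm := ⟨fun _ _ h => ⟨Ne.symm h.1, h.2.1.symm, h.2.2.symm⟩⟩
  loopless := ⟨fun _ h => h.1 rfl⟩

/-- The one-way infinite path `P_ω` on `ℕ`. -/
def rayG : SimpleGraph ℕ := SimpleGraph.fromRel (fun m n => n = m + 1)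

/-- `A` is a (not necessarily induced) subgraph of `B`. -/
def SubCopy {X Y : Type*} (A : SimpleGraph X) (B : SimpleGraph Y) : Prop :=
  ∃ f : X ↪ Y, ∀ u v, A.Adj u v → B.Adj (f u) (f v)

/-- `R` is (isomorphic to) the countable random graph: the extension property. -/
def IsRado (R : SimpleGraph ℕ) : Prop :=
  ∀ A B : Finset ℕ, Disjoint A B →
    ∃ v, v ∉ A ∧ v ∉ B ∧ (∀ a ∈ A, R.Adj v a) ∧ (∀ b ∈ B, ¬R.Adj v b)

/-- An `(s, ξ)`-embedding: an induced embedding of some `G_α`, `ξ ≤ α < λ⁺`, into `H`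
whose image contains `s` as the top part of a chain with `d`-values `0, …, n` and whose
last vertex has rank `> ξ`. -/
def IsSXEmb {V : Type} (G : SimpleGraph ℕ) (lam : Cardinal) (H : SimpleGraph V)
    (s : List V) (ξ : Ordinal) : Prop :=
  ∃ α : Ordinal, ξ ≤ α ∧ α < (Order.succ lam).ord ∧
    ∃ (f : Gg G α ↪g H) (t : List (TT α)),
      s = t.map ⇑f ∧
      (∀ i : Fin t.length, dT (t.get i) = i.1) ∧
      (∀ u ∈ t, ∀ v ∈ t, u ≤ v ∨ v ≤ u) ∧
      (∀ v ∈ t.getLast?, ξ < rT v)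

/-- The set `U` of finite sequences admitting `(s, ξ)`-embeddings for all `ξ < λ⁺`. -/
def UU {V : Type} (G : SimpleGraph ℕ) (lam : Cardinal) (H : SimpleGraph V) :
    Set (List V) :=
  {s | ∀ ξ < (Order.succ lam).ord, IsSXEmb G lam H s ξ}

/-!
If `t` realises `s` in an `(s, ξ + 1)`-embedding, then `t` followed by one more vertex of rank
`ξ + 1` (the top of `T α` if `t` is empty, otherwise the last vertex of `t` extended by `ξ + 1`)
realises some `s⌢v` in an `(s⌢v, ξ)`-embedding. As `H` has only `λ < cf λ⁺` vertices, a single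
`v` works for cofinally many `ξ < λ⁺`, hence for all of them, since `(s, ξ)`-embeddings are
also `(s, ξ')`-embeddings for `ξ' ≤ ξ`.
-/

lemma List.getLastD_le_of_mem {β : Type*} [Preorder β] {l : List β} (hl : l.Pairwise (· > ·))
    (d : β) {x : β} (hx : x ∈ l) : l.getLastD d ≤ x := by
  have hne := List.ne_nil_of_mem hx
  rw [List.getLastD_eq_getLast?, List.getLast?_eq_some_getLast hne, Option.getD_some]
  rw [← List.dropLast_append_getLast hne] at hl hx
  rcases List.mem_append.1 hx with hx | hx
  · exact ((List.pairwise_append.1 hl).2.2 x hx _ (List.mem_singleton_self _)).le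
  · rw [List.mem_singleton.1 hx]

namespace TT

variable {α : Ordinal}

lemma rT_le_of_mem (u : TT α) {x : Ordinal} (hx : x ∈ u.1) : rT u ≤ x :=
  List.getLastD_le_of_mem u.2.1 α hx

lemma rT_le (u : TT α) : rT u ≤ α := by
  rcases u with ⟨l, hl, hlt⟩
  rcases l.eq_nil_or_concat' with rfl | ⟨l', a, rfl⟩
  · exact le_rfl
  · exact (rT_le_of_mem _ (List.mem_append_right l' (List.mem_singleton_self a))).trans
      (hlt a (by simp)).le

def extend (u : TT α) (β : Ordinal) (hβ : β < rT u) : TT α :=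
  ⟨u.1 ++ [β],
    List.pairwise_append.2 ⟨u.2.1, List.pairwise_singleton _ β, fun x hx y hy => by
      rw [List.mem_singleton.1 hy]; exact hβ.trans_le (u.rT_le_of_mem hx)⟩,
    fun x hx => by
      rcases List.mem_append.1 hx with hx | hx
      · exact u.2.2 x hx
      · rw [List.mem_singleton.1 hx]; exact hβ.trans_le u.rT_le⟩

lemma extend_le (u : TT α) (β : Ordinal) (hβ : β < rT u) : u.extend β hβ ≤ u :=
  List.prefix_append _ _

lemma dT_extend (u : TT α) (β : Ordinal) (hβ : β < rT u) : dT (u.extend β hβ) = dT u + 1 :=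
  List.length_append

lemma rT_extend (u : TT α) (β : Ordinal) (hβ : β < rT u) : rT (u.extend β hβ) = β :=
  List.getLastD_concat

lemma le_of_comparable_of_dT_le {u v : TT α} (huv : u ≤ v ∨ v ≤ u) (hd : dT u ≤ dT v) :
    v ≤ u := by
  refine huv.elim (fun huv => le_of_eq (Subtype.ext ?_)) id
  exact (huv : v.1 <+: u.1).eq_of_length (le_antisymm (List.IsPrefix.length_le huv) hd)

end TT

def IsDepthChain {α : Ordinal} (t : List (TT α)) : Prop :=
  (∀ i : Fin t.length, dT (t.get i) = i.1) ∧ ∀ u ∈ t, ∀ v ∈ t, u ≤ v ∨ v ≤ u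

namespace IsDepthChain

variable {α : Ordinal} {t : List (TT α)}

lemma dT_getLast (ht : IsDepthChain t) (hne : t ≠ []) : dT (t.getLast hne) = t.length - 1 := by
  rw [List.getLast_eq_getElem]
  exact ht.1 ⟨_, Nat.sub_one_lt (List.length_pos_iff.2 hne).ne'⟩

lemma le_of_mem (ht : IsDepthChain t) (hne : t ≠ []) {u : TT α} (hu : u ∈ t) :
    t.getLast hne ≤ u := by
  refine TT.le_of_comparable_of_dT_le (ht.2 u hu _ (List.getLast_mem hne)) ?_
  obtain ⟨i, rfl⟩ := List.get_of_mem hu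
  rw [ht.1 i, ht.dT_getLast hne]
  omega

lemma append (ht : IsDepthChain t) {w : TT α} (hdw : dT w = t.length)
    (hw : ∀ u ∈ t, w ≤ u) : IsDepthChain (t ++ [w]) := by
  refine ⟨fun i => ?_, fun u hu v hv => ?_⟩
  · rcases lt_or_ge i.1 t.length with hi | hi
    · simpa [List.getElem_append_left hi] using ht.1 ⟨i, hi⟩
    · have hi' : i.1 = t.length := by
        have := i.2
        simp only [List.length_append, List.length_singleton] at this
        omega
      simp [hi', hdw]
  · rcases List.mem_append.1 hu with hu | hu <;> rcases List.mem_append.1 hv with hv | hv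
    · exact ht.2 u hu v hv
    · exact Or.inr (List.mem_singleton.1 hv ▸ hw u hu)
    · exact Or.inl (List.mem_singleton.1 hu ▸ hw v hv)
    · exact Or.inl (by rw [List.mem_singleton.1 hu, List.mem_singleton.1 hv])

lemma exists_append (ht : IsDepthChain t) {ξ : Ordinal} (hξα : Order.succ ξ ≤ α)
    (hlast : ∀ v ∈ t.getLast?, Order.succ ξ < rT v) :
    ∃ w : TT α, IsDepthChain (t ++ [w]) ∧ ξ < rT w := by
  by_cases hne : t = []
  · subst hne
    exact ⟨topT α, ht.append rfl (by simp), Order.succ_le_iff.1 hξα⟩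
  · have hlt := hlast _ (List.getLast?_eq_some_getLast hne)
    refine ⟨(t.getLast hne).extend _ hlt, ht.append ?_ fun u hu =>
      (TT.extend_le _ _ hlt).trans (ht.le_of_mem hne hu), ?_⟩
    · have := List.length_pos_iff.2 hne
      rw [TT.dT_extend, ht.dT_getLast hne]
      omega
    · rw [TT.rT_extend]; exact Order.lt_succ ξ

end IsDepthChain

section Embeddings

variable {V : Type} {G : SimpleGraph ℕ} {lam : Cardinal} {H : SimpleGraph V} {s : List V}

lemma IsSXEmb.mono {ξ ξ' : Ordinal} (hξ : ξ ≤ ξ') (h : IsSXEmb G lam H s ξ') :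
    IsSXEmb G lam H s ξ := by
  obtain ⟨α, hξ'α, hα, f, t, hs, hd, hch, hlast⟩ := h
  exact ⟨α, hξ.trans hξ'α, hα, f, t, hs, hd, hch, fun v hv => hξ.trans_lt (hlast v hv)⟩

lemma IsSXEmb.exists_append {ξ : Ordinal} (h : IsSXEmb G lam H s (Order.succ ξ)) :
    ∃ v, IsSXEmb G lam H (s ++ [v]) ξ := by
  obtain ⟨α, hξα, hα, f, t, rfl, hd, hch, hlast⟩ := h
  obtain ⟨w, ⟨hd', hch'⟩, hw⟩ := IsDepthChain.exists_append ⟨hd, hch⟩ hξα hlast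
  refine ⟨f w, α, (Order.le_succ ξ).trans hξα, hα, f, t ++ [w], by simp, hd', hch', ?_⟩
  intro v hv
  rw [List.getLast?_concat, Option.mem_some_iff] at hv
  exact hv ▸ hw

end Embeddings

lemma exists_forall_lt_of_mk_lt_cof {V : Type*} {Λ : Ordinal} {P : V → Ordinal → Prop}
    (hP : ∀ v ξ ξ', ξ ≤ ξ' → P v ξ' → P v ξ) (hV : Cardinal.mk V < Λ.cof)
    (h : ∀ ξ < Λ, ∃ v, P v ξ) : ∃ v, ∀ ξ < Λ, P v ξ := by
  by_contra! hbad
  choose β hβΛ hβ using hbad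
  obtain ⟨v, hv⟩ := h _ (Ordinal.iSup_lt_of_lt_cof hV hβΛ)
  exact hβ v (hP v _ _ (Ordinal.le_iSup β v) hv)

theorem stmt9_general {V : Type} (lam : Cardinal) (hlam : Cardinal.aleph0 ≤ lam)
    (G : SimpleGraph ℕ) (H : SimpleGraph V) (hV : Cardinal.mk V = lam) :
    ∀ s ∈ UU G lam H, ∃ v : V, s ++ [v] ∈ UU G lam H := by
  intro s hs
  have hcof : Cardinal.mk V < (Order.succ lam).ord.cof := by
    rw [(isRegular_succ hlam).cof_ord, hV]
    exact Order.lt_succ lam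
  refine exists_forall_lt_of_mk_lt_cof (fun _ _ _ => IsSXEmb.mono) hcof fun ξ hξ => ?_
  exact (hs _ ((isSuccLimit_ord (hlam.trans (Order.le_succ lam))).succ_lt hξ)).exists_append

/-- if every `G_α` (`α < λ⁺`) embeds into `H`, then every `s ∈ U` has a
one-point extension `s⌢v ∈ U`. -/
theorem stmt9 {V : Type} (lam : Cardinal) (hlam : Cardinal.aleph0 ≤ lam)
    (G : SimpleGraph ℕ) (H : SimpleGraph V) (hV : Cardinal.mk V = lam)
    (hemb : ∀ α : Ordinal, α < (Order.succ lam).ord → Nonempty (Gg G α ↪g H)) :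
    ∀ s ∈ UU G lam H, ∃ v : V, s ++ [v] ∈ UU G lam H :=
  stmt9_general lam hlam G H hV
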